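/- arXiv:1605.06222 — 2 statements merged into one kernel-verified Lean document; each statement's English description precedes it below -/
import Mathlib

section
/- Let Γ be a finite group, P a finite Γ-poset and Q an induced Γ-subposet of P. Then P strongly Γ-collapses to Q if and only if the set of Γ-orbits of P \ Q can be enumerated as α_1, …, α_n in such a way that for each i = 1, …, n, every element of α_i is a beat point of the induced subposet P \ (α_1 ∪ ⋯ ∪ α_{i-1}). -/
/-- A Γ-equivariant order-preserving self-map of the Γ-poset `P`, regarded as a map of the
induced subposet `A`, which fixes every point of `Q` (an element of `Def_Γ(A, Q)`). -/
def IsDefPosetMap (Γ : Type*) [Group Γ] {P : Type*} [PartialOrder P] [MulAction Γ P]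
    (A Q : Set P) (f : P → P) : Prop :=
  Set.MapsTo f A A ∧ (∀ x ∈ A, ∀ y ∈ A, x ≤ y → f x ≤ f y) ∧
    (∀ γ : Γ, ∀ x ∈ A, f (γ • x) = γ • f x) ∧ ∀ y ∈ Q, f y = y

/-- One step of a zigzag in `Def_Γ(A, Q)`: both maps belong to `Def_Γ(A, Q)` and they are
comparable in the pointwise order (on `A`). -/
def posetDefStep (Γ : Type*) [Group Γ] {P : Type*} [PartialOrder P] [MulAction Γ P]
    (A Q : Set P) (f g : P → P) : Prop :=
  IsDefPosetMap Γ A Q f ∧ IsDefPosetMap Γ A Q g ∧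
    ((∀ x ∈ A, f x ≤ g x) ∨ (∀ x ∈ A, g x ≤ f x))

/-- The induced Γ-subposet `A` of `P` strongly Γ-collapses to `Q ⊆ A`: there is a map `f` in
`Def_Γ(A, Q)`, joined to the identity by a finite zigzag of pairwise comparable elements of
`Def_Γ(A, Q)`, whose image (on `A`) is contained in `Q`.  Taking `A = Set.univ` gives the
notion "`P` strongly Γ-collapses to `Q`". -/
def StronglyCollapsesOn (Γ : Type*) [Group Γ] {P : Type*} [PartialOrder P] [MulAction Γ P]
    (A Q : Set P) : Prop :=
  ∃ f : P → P, IsDefPosetMap Γ A Q f ∧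
    Relation.ReflTransGen (posetDefStep Γ A Q) id f ∧ ∀ x ∈ A, f x ∈ Q

/-- `x` is a beat point of the induced subposet `A` of `P`: `x ∈ A` and either
`{z ∈ A | x < z}` has a minimum or `{z ∈ A | z < x}` has a maximum. -/
def IsBeatPointOn {P : Type*} [PartialOrder P] (A : Set P) (x : P) : Prop :=
  x ∈ A ∧ ((∃ y, IsLeast {z : P | z ∈ A ∧ x < z} y) ∨ (∃ y, IsGreatest {z : P | z ∈ A ∧ z < x} y))

/-!
Removing a Γ-orbit of beat points is an elementary equivariant strong collapse: sending every
point of the orbit to its unique lower (or upper) cover is a Γ-equivariant retraction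
comparable with the identity. It is monotone because an orbit of a finite group acting by order
automorphisms is an antichain. Conversely, along a zigzag from the identity to a map into `Q`,
the first map `g` that differs from the identity is comparable with it, say `g ≤ id`; a minimal
point `x` moved by `g` is then a lower beat point with `g x` the greatest point below it, its
whole orbit is moved (hence avoids `Q`), and composing the zigzag with the retraction removing
this orbit gives a strong collapse of the smaller poset. Both directions follow by induction.
-/
open MulAction

instance OrderDual.covariantClass_smul_le {M α : Type*} [SMul M α] [LE α]
    [CovariantClass M α HSMul.hSMul LE.le] : CovariantClass M αᵒᵈ HSMul.hSMul LE.le :=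
  ⟨fun m _ _ h =>
    CovariantClass.elim (M := M) (N := α) (μ := HSMul.hSMul) (r := (· ≤ ·)) m h⟩

instance covariantClass_smul_lt_of_le {G α : Type*} [Group G] [PartialOrder α] [MulAction G α]
    [CovariantClass G α HSMul.hSMul LE.le] : CovariantClass G α HSMul.hSMul LT.lt :=
  ⟨fun g _ _ h => (smul_mono_right g).strictMono_of_injective (MulAction.injective g) h⟩

theorem forall_smul_mem_diff_orbit {Γ P : Type*} [Group Γ] [MulAction Γ P] {A : Set P}
    (hA : ∀ γ : Γ, ∀ z ∈ A, γ • z ∈ A) (x : P) :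
    ∀ γ : Γ, ∀ z ∈ A \ orbit Γ x, γ • z ∈ A \ orbit Γ x :=
  fun γ z hz => ⟨hA γ z hz.1, fun h => hz.2 (by simpa using mem_orbit_of_mem_orbit γ⁻¹ h)⟩

section Orbits

variable {Γ P : Type*} [Group Γ] [PartialOrder P] [MulAction Γ P]
  [CovariantClass Γ P HSMul.hSMul LE.le]

theorem isAntichain_orbit [Finite Γ] (x : P) : IsAntichain (· ≤ ·) (orbit Γ x) := by
  rintro _ ⟨γ, rfl⟩ _ ⟨δ, rfl⟩ hne hle
  have : (δ * γ⁻¹) • γ • x = γ • x := by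
    apply smul_eq_of_le_smul
    rwa [smul_smul, inv_mul_cancel_right]
  rw [smul_smul, inv_mul_cancel_right] at this
  exact hne this.symm

variable {A : Set P}

theorem IsGreatest.smul_of_invariant (hA : ∀ γ : Γ, ∀ z ∈ A, γ • z ∈ A) (γ : Γ) {z y : P}
    (h : IsGreatest {w | w ∈ A ∧ w < z} y) : IsGreatest {w | w ∈ A ∧ w < γ • z} (γ • y) := by
  refine ⟨⟨hA γ y h.1.1, smul_strictMono_right γ h.1.2⟩, fun w ⟨hwA, hwz⟩ => ?_⟩
  have hw : γ⁻¹ • w ≤ y := h.2 ⟨hA γ⁻¹ w hwA, by simpa using smul_strictMono_right γ⁻¹ hwz⟩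
  simpa using smul_le_smul_left γ hw

theorem IsLeast.smul_of_invariant (hA : ∀ γ : Γ, ∀ z ∈ A, γ • z ∈ A) (γ : Γ) {z y : P}
    (h : IsLeast {w | w ∈ A ∧ z < w} y) : IsLeast {w | w ∈ A ∧ γ • z < w} (γ • y) :=
  IsGreatest.smul_of_invariant (P := Pᵒᵈ) hA γ h

theorem IsBeatPointOn.smul (hA : ∀ γ : Γ, ∀ z ∈ A, γ • z ∈ A) (γ : Γ) {x : P}
    (hx : IsBeatPointOn A x) : IsBeatPointOn A (γ • x) :=
  ⟨hA γ x hx.1, hx.2.imp (fun ⟨y, hy⟩ => ⟨γ • y, hy.smul_of_invariant hA γ⟩)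
    (fun ⟨y, hy⟩ => ⟨γ • y, hy.smul_of_invariant hA γ⟩)⟩

end Orbits

section DefMaps

variable {Γ P : Type*} [Group Γ] [PartialOrder P] [MulAction Γ P] {A B Q Q' : Set P}
  {f g r : P → P}

theorem isDefPosetMap_id : IsDefPosetMap Γ A Q id :=
  ⟨fun _ h => h, fun _ _ _ _ h => h, fun _ _ _ => rfl, fun _ _ => rfl⟩

theorem IsDefPosetMap.mono (hQ : Q' ⊆ Q) (hf : IsDefPosetMap Γ A Q f) :
    IsDefPosetMap Γ A Q' f :=
  ⟨hf.1, hf.2.1, hf.2.2.1, fun y hy => hf.2.2.2 y (hQ hy)⟩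

theorem posetDefStep.mono (hQ : Q' ⊆ Q) (h : posetDefStep Γ A Q f g) :
    posetDefStep Γ A Q' f g :=
  ⟨h.1.mono hQ, h.2.1.mono hQ, h.2.2⟩

theorem IsDefPosetMap.ofDual (hf : IsDefPosetMap Γ (P := Pᵒᵈ) A Q f) :
    IsDefPosetMap Γ A Q f :=
  ⟨hf.1, fun x hx y hy hxy => hf.2.1 y hy x hx hxy, hf.2.2⟩

theorem posetDefStep.ofDual (h : posetDefStep Γ (P := Pᵒᵈ) A Q f g) :
    posetDefStep Γ A Q f g :=
  ⟨h.1.ofDual, h.2.1.ofDual, h.2.2.symm⟩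

theorem IsDefPosetMap.comp_right_of_mapsTo (hg : IsDefPosetMap Γ B Q g)
    (hr : IsDefPosetMap Γ A Q r) (hBA : B ⊆ A) (hrB : Set.MapsTo r A B) :
    IsDefPosetMap Γ A Q (g ∘ r) := by
  refine ⟨fun z hz => hBA (hg.1 (hrB hz)), fun a ha b hb hab => ?_, fun γ z hz => ?_,
    fun y hy => ?_⟩
  · exact hg.2.1 _ (hrB ha) _ (hrB hb) (hr.2.1 a ha b hb hab)
  · rw [Function.comp_apply, hr.2.2.1 γ z hz, hg.2.2.1 γ _ (hrB hz), Function.comp_apply]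
  · rw [Function.comp_apply, hr.2.2.2 y hy, hg.2.2.2 y hy]

theorem IsDefPosetMap.comp_left_of_mapsTo (hr : IsDefPosetMap Γ A Q r)
    (hg : IsDefPosetMap Γ A Q g) (hBA : B ⊆ A) (hrB : Set.MapsTo r A B) :
    IsDefPosetMap Γ B Q (r ∘ g) := by
  refine ⟨fun z hz => hrB (hg.1 (hBA hz)), fun a ha b hb hab => ?_, fun γ z hz => ?_,
    fun y hy => ?_⟩
  · exact hr.2.1 _ (hg.1 (hBA ha)) _ (hg.1 (hBA hb)) (hg.2.1 a (hBA ha) b (hBA hb) hab)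
  · rw [Function.comp_apply, hg.2.2.1 γ z (hBA hz), hr.2.2.1 γ _ (hg.1 (hBA hz)),
      Function.comp_apply]
  · rw [Function.comp_apply, hg.2.2.2 y hy, hr.2.2.2 y hy]

theorem stronglyCollapsesOn_of_subset (h : A ⊆ Q) : StronglyCollapsesOn Γ A Q :=
  ⟨id, isDefPosetMap_id, .refl, h⟩

theorem StronglyCollapsesOn.of_posetDefStep_id (hr : posetDefStep Γ A Q id r) (hBA : B ⊆ A)
    (hrB : Set.MapsTo r A B) (h : StronglyCollapsesOn Γ B Q) : StronglyCollapsesOn Γ A Q := by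
  obtain ⟨f, hf, hchain, himg⟩ := h
  have hlift : Relation.ReflTransGen (posetDefStep Γ A Q) (id ∘ r) (f ∘ r) := by
    refine hchain.lift (· ∘ r) fun a b ⟨ha, hb, hab⟩ =>
      ⟨ha.comp_right_of_mapsTo hr.2.1 hBA hrB, hb.comp_right_of_mapsTo hr.2.1 hBA hrB, ?_⟩
    exact hab.imp (fun h z hz => h _ (hrB hz)) (fun h z hz => h _ (hrB hz))
  exact ⟨f ∘ r, hf.comp_right_of_mapsTo hr.2.1 hBA hrB, .head hr hlift,
    fun z hz => himg _ (hrB hz)⟩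

theorem StronglyCollapsesOn.restrict (hr : IsDefPosetMap Γ A Q r) (hBA : B ⊆ A)
    (hrB : Set.MapsTo r A B) (hrid : ∀ z ∈ B, r z = z) (h : StronglyCollapsesOn Γ A Q) :
    StronglyCollapsesOn Γ B Q := by
  obtain ⟨f, hf, hchain, himg⟩ := h
  have hlift : Relation.ReflTransGen (posetDefStep Γ B Q) (r ∘ id) (r ∘ f) := by
    refine hchain.lift (r ∘ ·) fun a b ⟨ha, hb, hab⟩ =>
      ⟨hr.comp_left_of_mapsTo ha hBA hrB, hr.comp_left_of_mapsTo hb hBA hrB, ?_⟩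
    refine hab.imp (fun h z hz => ?_) (fun h z hz => ?_)
    · exact hr.2.1 _ (ha.1 (hBA hz)) _ (hb.1 (hBA hz)) (h z (hBA hz))
    · exact hr.2.1 _ (hb.1 (hBA hz)) _ (ha.1 (hBA hz)) (h z (hBA hz))
  have hstep : posetDefStep Γ B Q id (r ∘ id) :=
    ⟨isDefPosetMap_id, hr.comp_left_of_mapsTo isDefPosetMap_id hBA hrB,
      Or.inl fun z hz => (hrid z hz).ge⟩
  refine ⟨r ∘ f, hr.comp_left_of_mapsTo hf hBA hrB, .head hstep hlift, fun z hz => ?_⟩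
  rw [Function.comp_apply, hr.2.2.2 _ (himg z (hBA hz))]
  exact himg z (hBA hz)

theorem exists_posetDefStep_id_of_reflTransGen
    (h : Relation.ReflTransGen (posetDefStep Γ A Q) id f) (hf : ∃ z ∈ A, f z ≠ z) :
    ∃ g, posetDefStep Γ A Q id g ∧ ∃ z ∈ A, g z ≠ z := by
  induction h with
  | refl => exact absurd hf (by simp)
  | @tail b c _ hbc ih =>
    by_cases hb : ∃ z ∈ A, b z ≠ z
    · exact ih hb
    push Not at hb
    refine ⟨c, ⟨isDefPosetMap_id, hbc.2.1, ?_⟩, hf⟩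
    exact hbc.2.2.imp (fun h z hz => by simpa [hb z hz] using h z hz)
      (fun h z hz => by simpa [hb z hz] using h z hz)

end DefMaps

section Retraction

variable {Γ P : Type*} [Group Γ] [PartialOrder P] [MulAction Γ P]
  [CovariantClass Γ P HSMul.hSMul LE.le] {A Q S : Set P}

theorem posetDefStep_id_piecewise_of_isGreatest [DecidablePred (· ∈ S)] {c : P → P}
    (hA : ∀ γ : Γ, ∀ z ∈ A, γ • z ∈ A) (hS : ∀ γ : Γ, ∀ z ∈ S, γ • z ∈ S)
    (hSanti : IsAntichain (· ≤ ·) S) (hc : ∀ z ∈ S, IsGreatest {w | w ∈ A ∧ w < z} (c z)) :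
    posetDefStep Γ A Sᶜ id (S.piecewise c id) ∧ Set.MapsTo (S.piecewise c id) A (A \ S) := by
  have hlt (z) (hz : z ∈ S) : c z < z := (hc z hz).1.2
  have hmaps : Set.MapsTo (S.piecewise c id) A (A \ S) := by
    intro z hzA
    by_cases hz : z ∈ S
    · rw [Set.piecewise_eq_of_mem _ _ _ hz]
      exact ⟨(hc z hz).1.1, fun hcz => hSanti hcz hz (hlt z hz).ne (hlt z hz).le⟩
    · rw [Set.piecewise_eq_of_notMem _ _ _ hz]
      exact ⟨hzA, hz⟩
  have hmono (a) (ha : a ∈ A) (b) (hb : b ∈ A) (hab : a ≤ b) :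
      S.piecewise c id a ≤ S.piecewise c id b := by
    by_cases haS : a ∈ S <;> by_cases hbS : b ∈ S <;>
      simp only [Set.piecewise, haS, hbS, if_true, if_false, id]
    · rw [hSanti.eq haS hbS hab]
    · exact (hlt a haS).le.trans hab
    · exact (hc b hbS).2 ⟨ha, hab.lt_of_ne fun h => haS (h ▸ hbS)⟩
    · exact hab
  have hequiv (γ : Γ) (z) (_ : z ∈ A) : S.piecewise c id (γ • z) = γ • S.piecewise c id z := by
    by_cases hz : z ∈ S
    · rw [Set.piecewise_eq_of_mem _ _ _ hz, Set.piecewise_eq_of_mem _ _ _ (hS γ z hz)]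
      exact (hc _ (hS γ z hz)).unique ((hc z hz).smul_of_invariant hA γ)
    · have hγz : γ • z ∉ S := fun h => hz (by simpa using hS γ⁻¹ _ h)
      rw [Set.piecewise_eq_of_notMem _ _ _ hz, Set.piecewise_eq_of_notMem _ _ _ hγz, id, id]
  refine ⟨⟨isDefPosetMap_id, ⟨hmaps.mono_right Set.sdiff_subset, hmono, hequiv,
    fun z hz => Set.piecewise_eq_of_notMem _ _ _ hz⟩, Or.inr fun z hz => ?_⟩, hmaps⟩
  by_cases hzS : z ∈ S
  · rw [Set.piecewise_eq_of_mem _ _ _ hzS]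
    exact (hlt z hzS).le
  · rw [Set.piecewise_eq_of_notMem _ _ _ hzS, id]

theorem exists_posetDefStep_id_mapsTo_diff_orbit [Finite Γ]
    (hA : ∀ γ : Γ, ∀ z ∈ A, γ • z ∈ A) {x : P} (hx : IsBeatPointOn A x) :
    ∃ r, posetDefStep Γ A (orbit Γ x)ᶜ id r ∧ Set.MapsTo r A (A \ orbit Γ x) := by
  classical
  have horb : ∀ γ : Γ, ∀ z ∈ orbit Γ x, γ • z ∈ orbit Γ x :=
    fun γ _ hz => mem_orbit_of_mem_orbit γ hz
  rcases hx.2 with ⟨y, hy⟩ | ⟨y, hy⟩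
  · have : ∀ z ∈ orbit Γ x, ∃ y, IsLeast {w | w ∈ A ∧ z < w} y := by
      rintro _ ⟨γ, rfl⟩
      exact ⟨_, hy.smul_of_invariant hA γ⟩
    choose! c hc using this
    have h := posetDefStep_id_piecewise_of_isGreatest (P := Pᵒᵈ) hA horb
      (isAntichain_orbit (P := Pᵒᵈ) x) hc
    exact ⟨_, h.1.ofDual, h.2⟩
  · have : ∀ z ∈ orbit Γ x, ∃ y, IsGreatest {w | w ∈ A ∧ w < z} y := by
      rintro _ ⟨γ, rfl⟩
      exact ⟨_, hy.smul_of_invariant hA γ⟩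
    choose! c hc using this
    exact ⟨_, posetDefStep_id_piecewise_of_isGreatest hA horb (isAntichain_orbit x) hc⟩

end Retraction

theorem isGreatest_of_minimal_ne {P : Type*} [PartialOrder P] {A : Set P} {g : P → P}
    (hmaps : Set.MapsTo g A A) (hmono : ∀ a ∈ A, ∀ b ∈ A, a ≤ b → g a ≤ g b)
    (hle : ∀ z ∈ A, g z ≤ z) {x : P} (hx : Minimal (fun z => z ∈ A ∧ g z ≠ z) x) :
    IsGreatest {w | w ∈ A ∧ w < x} (g x) := by
  refine ⟨⟨hmaps hx.1.1, (hle x hx.1.1).lt_of_ne hx.1.2⟩, fun w ⟨hwA, hwx⟩ => ?_⟩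
  have hgw : g w = w := by
    by_contra hgw
    exact hx.not_prop_of_lt hwx ⟨hwA, hgw⟩
  exact hgw ▸ hmono w hwA x hx.1.1 hwx.le

section Collapse

variable {Γ P : Type*} [Group Γ] [PartialOrder P] [MulAction Γ P] {A Q : Set P} {g : P → P}

theorem posetDefStep.exists_isBeatPointOn [Finite P] (hg : posetDefStep Γ A Q id g)
    (hmove : ∃ z ∈ A, g z ≠ z) : ∃ x, g x ≠ x ∧ IsBeatPointOn A x := by
  have hfin := Set.toFinite {z | z ∈ A ∧ g z ≠ z}
  have hmaps := hg.2.1.1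
  rcases hg.2.2 with hge | hle
  · obtain ⟨x, hx⟩ := hfin.exists_maximal hmove
    refine ⟨x, hx.1.2, hx.1.1, Or.inl ⟨g x, ?_⟩⟩
    exact isGreatest_of_minimal_ne (P := Pᵒᵈ) hmaps
      (fun a ha b hb hab => hg.2.1.2.1 b hb a ha hab) hge hx
  · obtain ⟨x, hx⟩ := hfin.exists_minimal hmove
    exact ⟨x, hx.1.2, hx.1.1, Or.inr ⟨g x, isGreatest_of_minimal_ne hmaps hg.2.1.2.1 hle hx⟩⟩

variable [CovariantClass Γ P HSMul.hSMul LE.le]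

theorem StronglyCollapsesOn.exists_beat_orbit [Finite Γ] [Finite P]
    (hA : ∀ γ : Γ, ∀ z ∈ A, γ • z ∈ A) (h : StronglyCollapsesOn Γ A Q)
    (hAQ : (A \ Q).Nonempty) :
    ∃ x, orbit Γ x ⊆ A \ Q ∧ IsBeatPointOn A x ∧ StronglyCollapsesOn Γ (A \ orbit Γ x) Q := by
  have ⟨f, _, hchain, himg⟩ := h
  obtain ⟨z, hzA, hzQ⟩ := hAQ
  obtain ⟨g, hg, hmove⟩ := exists_posetDefStep_id_of_reflTransGen hchain
    ⟨z, hzA, fun hfz => hzQ (hfz ▸ himg z hzA)⟩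
  obtain ⟨x, hgx, hx⟩ := hg.exists_isBeatPointOn hmove
  have horb : orbit Γ x ⊆ A \ Q := by
    rintro _ ⟨γ, rfl⟩
    refine ⟨hA γ x hx.1, fun hQ => hgx ?_⟩
    have := hg.2.1.2.2.1 γ x hx.1
    rw [hg.2.1.2.2.2 _ hQ] at this
    exact (smul_left_cancel γ this).symm
  obtain ⟨r, hr, hrmaps⟩ := exists_posetDefStep_id_mapsTo_diff_orbit hA hx
  have hQ : Q ⊆ (orbit Γ x)ᶜ := fun q hq hqx => (horb hqx).2 hq
  exact ⟨x, horb, hx, h.restrict (hr.2.1.mono hQ) Set.sdiff_subset hrmaps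
    fun z hz => hr.2.1.2.2.2 z hz.2⟩

end Collapse

theorem Fin.iUnion_lt_succ {α : Type*} {n : ℕ} (s : Fin (n + 1) → Set α) (i : Fin n) :
    ⋃ j, ⋃ (_ : j < i.succ), s j = s 0 ∪ ⋃ j, ⋃ (_ : j < i), s j.succ := by
  ext
  simp [Fin.exists_fin_succ, Fin.succ_pos]

section Enumeration

variable {Γ P : Type*} [Group Γ] [PartialOrder P] [MulAction Γ P] {A Q : Set P}

structure IsBeatOrbitEnumeration (Γ : Type*) [Group Γ] {P : Type*} [PartialOrder P]
    [MulAction Γ P] (A Q : Set P) {n : ℕ} (α : Fin n → Set P) : Prop where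
  injective : Function.Injective α
  exists_orbit : ∀ i, ∃ x, x ∉ Q ∧ α i = orbit Γ x
  iUnion_eq : ⋃ i, α i = A \ Q
  isBeatPointOn : ∀ i, ∀ x ∈ α i, IsBeatPointOn (A \ ⋃ j, ⋃ (_ : j < i), α j) x

theorem isBeatOrbitEnumeration_elim0 (h : A \ Q = ∅) :
    IsBeatOrbitEnumeration Γ A Q (Fin.elim0 : Fin 0 → Set P) :=
  ⟨fun i => i.elim0, fun i => i.elim0, by rw [h, Set.iUnion_of_empty], fun i => i.elim0⟩

theorem IsBeatOrbitEnumeration.cons {n : ℕ} {α : Fin n → Set P} {x : P}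
    (hx : orbit Γ x ⊆ A \ Q) (hbeat : ∀ z ∈ orbit Γ x, IsBeatPointOn A z)
    (h : IsBeatOrbitEnumeration Γ (A \ orbit Γ x) Q α) :
    IsBeatOrbitEnumeration Γ A Q (Fin.cons (orbit Γ x) α) := by
  refine ⟨Fin.cons_injective_iff.2 ⟨?_, h.injective⟩,
    Fin.forall_fin_succ.2 ⟨⟨x, (hx (mem_orbit_self x)).2, rfl⟩, h.exists_orbit⟩, ?_,
    Fin.forall_fin_succ.2 ⟨fun z hz => by simpa using hbeat z hz, fun i z hz => ?_⟩⟩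
  · rintro ⟨i, hi⟩
    have hxi : x ∈ ⋃ i, α i := Set.mem_iUnion_of_mem i (hi ▸ mem_orbit_self x)
    rw [h.iUnion_eq] at hxi
    exact hxi.1.2 (mem_orbit_self x)
  · rw [Set.iUnion_cons, h.iUnion_eq, Set.sdiff_sdiff_comm, Set.union_sdiff_cancel hx]
  · rw [Fin.iUnion_lt_succ, Fin.cons_zero, ← Set.sdiff_sdiff]
    simpa using h.isBeatPointOn i z hz

theorem IsBeatOrbitEnumeration.tail {n : ℕ} {α : Fin (n + 1) → Set P}
    (h : IsBeatOrbitEnumeration Γ A Q α) :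
    IsBeatOrbitEnumeration Γ (A \ α 0) Q (Fin.tail α) := by
  refine ⟨h.injective.comp (Fin.succ_injective n), fun i => h.exists_orbit i.succ, ?_,
    fun i z hz => ?_⟩
  · have hdisj : Disjoint (α 0) (⋃ i, Fin.tail α i) := by
      refine Set.disjoint_iUnion_right.2 fun i => ?_
      obtain ⟨x, -, hx⟩ := h.exists_orbit 0
      obtain ⟨y, -, hy⟩ := h.exists_orbit i.succ
      have hne : α 0 ≠ α i.succ := h.injective.ne (Fin.succ_ne_zero i).symm
      rw [Fin.tail, hx, hy] at *
      exact (orbit.eq_or_disjoint x y).resolve_left hne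
    rw [Set.sdiff_sdiff_comm, ← h.iUnion_eq, Set.iUnion_fin_add_one_eq_iUnion_succ,
      Set.union_sdiff_left]
    exact hdisj.symm.sdiff_eq_left.symm
  · have := h.isBeatPointOn i.succ z hz
    rwa [Fin.iUnion_lt_succ, ← Set.sdiff_sdiff] at this

end Enumeration

section Main

variable {Γ P : Type*} [Group Γ] [PartialOrder P] [MulAction Γ P]
  [CovariantClass Γ P HSMul.hSMul LE.le] {A Q : Set P}

theorem StronglyCollapsesOn.exists_isBeatOrbitEnumeration [Finite Γ] [Finite P]
    (hA : ∀ γ : Γ, ∀ z ∈ A, γ • z ∈ A) (h : StronglyCollapsesOn Γ A Q) :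
    ∃ n, ∃ α : Fin n → Set P, IsBeatOrbitEnumeration Γ A Q α := by
  induction hN : (A \ Q).ncard using Nat.strong_induction_on generalizing A with
  | _ N ih =>
  rcases (A \ Q).eq_empty_or_nonempty with hAQ | hAQ
  · exact ⟨0, Fin.elim0, isBeatOrbitEnumeration_elim0 hAQ⟩
  obtain ⟨x, hx, hxbeat, h'⟩ := h.exists_beat_orbit hA hAQ
  have hlt : ((A \ orbit Γ x) \ Q).ncard < N := by
    rw [← hN, Set.sdiff_sdiff_comm]
    refine Set.ncard_lt_ncard (Set.sdiff_ssubset_left_iff.2 ?_) (Set.toFinite _)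
    exact ⟨x, hx (mem_orbit_self x), mem_orbit_self x⟩
  obtain ⟨n, α, hα⟩ := ih _ hlt (forall_smul_mem_diff_orbit hA x) h' rfl
  refine ⟨n + 1, _, hα.cons hx ?_⟩
  rintro _ ⟨γ, rfl⟩
  exact hxbeat.smul hA γ

theorem IsBeatOrbitEnumeration.stronglyCollapsesOn [Finite Γ] {n : ℕ} {α : Fin n → Set P}
    (hA : ∀ γ : Γ, ∀ z ∈ A, γ • z ∈ A) (h : IsBeatOrbitEnumeration Γ A Q α) :
    StronglyCollapsesOn Γ A Q := by
  induction n generalizing A with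
  | zero =>
    exact stronglyCollapsesOn_of_subset (Set.sdiff_eq_empty.1 (by simpa using h.iUnion_eq.symm))
  | succ n ih =>
    obtain ⟨x, -, hx⟩ := h.exists_orbit 0
    have hxbeat : IsBeatPointOn A x := by
      simpa using h.isBeatPointOn 0 x (hx ▸ mem_orbit_self x)
    have hQ : Q ⊆ (orbit Γ x)ᶜ := fun q hq hqx =>
      (h.iUnion_eq ▸ Set.mem_iUnion_of_mem 0 (hx ▸ hqx) : q ∈ A \ Q).2 hq
    obtain ⟨r, hr, hrmaps⟩ := exists_posetDefStep_id_mapsTo_diff_orbit hA hxbeat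
    have htail := h.tail
    rw [hx] at htail
    exact (ih (forall_smul_mem_diff_orbit hA x) htail).of_posetDefStep_id (hr.mono hQ)
      Set.sdiff_subset hrmaps

end Main

theorem stronglyCollapses_iff_orbit_enumeration_general {Γ P : Type*} [Group Γ] [Finite Γ]
    [PartialOrder P] [Finite P] [MulAction Γ P]
    (hmono : ∀ γ : Γ, Monotone fun x : P => γ • x)
    (Q : Set P) :
    StronglyCollapsesOn Γ Set.univ Q ↔
      ∃ (n : ℕ) (α : Fin n → Set P), Function.Injective α ∧
        (∀ i, ∃ x, x ∉ Q ∧ α i = MulAction.orbit Γ x) ∧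
        (⋃ i, α i) = Qᶜ ∧
        ∀ i : Fin n, ∀ x ∈ α i, IsBeatPointOn ((⋃ j, ⋃ (_ : j < i), α j)ᶜ) x := by
  have : CovariantClass Γ P HSMul.hSMul LE.le := ⟨fun γ _ _ h => hmono γ h⟩
  have huniv : ∀ γ : Γ, ∀ z ∈ (Set.univ : Set P), γ • z ∈ Set.univ := fun _ _ _ => trivial
  simp only [Set.compl_eq_univ_sdiff]
  constructor
  · intro h
    obtain ⟨n, α, hα⟩ := h.exists_isBeatOrbitEnumeration huniv
    exact ⟨n, α, hα.injective, hα.exists_orbit, hα.iUnion_eq, hα.isBeatPointOn⟩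
  · rintro ⟨n, α, hinj, horb, hU, hbeat⟩
    exact IsBeatOrbitEnumeration.stronglyCollapsesOn huniv ⟨hinj, horb, hU, hbeat⟩

/-- Let Γ be a finite group, P a finite Γ-poset and Q an induced Γ-subposet of P.
Then P strongly Γ-collapses to Q if and only if the set of Γ-orbits of P \ Q can be enumerated
as α_1, …, α_n in such a way that for each i, every element of α_i is a beat point of the
induced subposet P \ (α_1 ∪ ⋯ ∪ α_{i-1}). -/
theorem stronglyCollapses_iff_orbit_enumeration {Γ P : Type*} [Group Γ] [Finite Γ]
    [PartialOrder P] [Finite P] [MulAction Γ P]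
    (hmono : ∀ γ : Γ, Monotone fun x : P => γ • x)
    (Q : Set P) (hQinv : ∀ γ : Γ, ∀ x ∈ Q, γ • x ∈ Q) :
    StronglyCollapsesOn Γ Set.univ Q ↔
      ∃ (n : ℕ) (α : Fin n → Set P), Function.Injective α ∧
        (∀ i, ∃ x, x ∉ Q ∧ α i = MulAction.orbit Γ x) ∧
        (⋃ i, α i) = Qᶜ ∧
        ∀ i : Fin n, ∀ x ∈ α i, IsBeatPointOn ((⋃ j, ⋃ (_ : j < i), α j)ᶜ) x :=
  stronglyCollapses_iff_orbit_enumeration_general hmono Q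
end

section
/- Let Γ be a finite group and T a right Γ-graph. If (K,L) is an r-NDR pair of Γ-simplicial complexes, then (A_T(K), A_T(L)) is an r-NDR pair of graphs. -/
/-- An abstract simplicial complex on the vertex type `V`: a family of finite subsets of `V`
closed under taking subsets. -/
structure Cplx (V : Type*) where
  faces : Set (Set V)
  finite_mem : ∀ σ ∈ faces, Set.Finite σ
  down_closed : ∀ σ ∈ faces, ∀ τ ⊆ σ, τ ∈ faces

/-- The vertex set of a simplicial complex. -/
def Cplx.verts {V : Type*} (K : Cplx V) : Set V := {v | ({v} : Set V) ∈ K.faces}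

/-- `a` is an action of the group `Γ` on the vertex type of `K` by simplicial automorphisms. -/
def IsCplxAction (Γ : Type*) [Group Γ] {V : Type*} (a : Γ → V → V) (K : Cplx V) : Prop :=
  (∀ v, a 1 v = v) ∧ (∀ γ γ' : Γ, ∀ v, a (γ * γ') v = a γ (a γ' v)) ∧
    ∀ γ : Γ, ∀ σ ∈ K.faces, (a γ) '' σ ∈ K.faces

/-- A simplicial multi-map from `K` to `L`: it assigns to each vertex of `K` a nonempty subset
of the vertices of `L`, so that `⋃ v ∈ σ, η v` is a simplex of `L` for every simplex `σ` of
`K`. -/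
def IsMultiMap {V W : Type*} (K : Cplx V) (L : Cplx W) (η : V → Set W) : Prop :=
  (∀ v ∈ K.verts, (η v).Nonempty) ∧ ∀ σ ∈ K.faces, (⋃ v ∈ σ, η v) ∈ L.faces

/-- A Γ-equivariant simplicial multi-map, i.e. an element of `Map_Γ(K, L)`. -/
def IsEquivMultiMap (Γ : Type*) [Group Γ] {V W : Type*} (a : Γ → V → V) (b : Γ → W → W)
    (K : Cplx V) (L : Cplx W) (η : V → Set W) : Prop :=
  IsMultiMap K L η ∧ ∀ γ : Γ, ∀ v ∈ K.verts, η (a γ v) = (b γ) '' (η v)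

/-- Pointwise order on multi-maps out of `K` (on the vertices of `K`). -/
def mmLE {V W : Type*} (K : Cplx V) (η η' : V → Set W) : Prop := ∀ v ∈ K.verts, η v ⊆ η' v

/-- An element of `Def_Γ(K, L)`: a Γ-equivariant simplicial multi-map `K → K` with
`η v = {v}` for every vertex `v` of the subcomplex `L`. -/
def IsDefMultiMap (Γ : Type*) [Group Γ] {V : Type*} (a : Γ → V → V) (K L : Cplx V)
    (η : V → Set V) : Prop :=
  IsEquivMultiMap Γ a a K K η ∧ ∀ v ∈ L.verts, η v = {v}

/-- One step of a zigzag in `Def_Γ(K, L)`: both multi-maps lie in `Def_Γ(K, L)` and they are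
comparable. -/
def cplxDefStep (Γ : Type*) [Group Γ] {V : Type*} (a : Γ → V → V) (K L : Cplx V)
    (η η' : V → Set V) : Prop :=
  IsDefMultiMap Γ a K L η ∧ IsDefMultiMap Γ a K L η' ∧ (mmLE K η η' ∨ mmLE K η' η)

/-- The Γ-simplicial complex `K` strongly Γ-collapses to its Γ-subcomplex `L`: there is a
simplicial map `f` belonging to the identity component of `Def_Γ(K, L)` (joined to the
identity by a finite zigzag of pairwise comparable elements) whose image is contained in
`L`. -/
def CplxCollapses (Γ : Type*) [Group Γ] {V : Type*} (a : Γ → V → V) (K L : Cplx V) : Prop :=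
  ∃ f : V → V, IsDefMultiMap Γ a K L (fun v => {f v}) ∧
    Relation.ReflTransGen (cplxDefStep Γ a K L) (fun v => {v}) (fun v => {f v}) ∧
    ∀ σ ∈ K.faces, f '' σ ∈ L.faces
/-- The neighborhood `ν_K(L) = ⋃_{v ∈ V(L)} st_K(v)` of the subcomplex `L` in `K`. -/
def nbhd {V : Type*} (K L : Cplx V) : Cplx V where
  faces := {σ | ∃ v ∈ L.verts, insert v σ ∈ K.faces}
  finite_mem := fun σ h => by
    obtain ⟨v, -, h⟩ := h
    exact (K.finite_mem _ h).subset (Set.subset_insert _ _)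
  down_closed := fun σ h τ hτσ => by
    obtain ⟨v, hv, h⟩ := h
    exact ⟨v, hv, K.down_closed _ h _ (Set.insert_subset_insert hτσ)⟩

/-- The iterated neighborhood `ν^r_K(L)` (with `ν^0_K(L) = L`). -/
def nbhdIter {V : Type*} (K L : Cplx V) : ℕ → Cplx V
  | 0 => L
  | r + 1 => nbhd K (nbhdIter K L r)

/-- `(K, L)` is an `r`-NDR pair of Γ-simplicial complexes: there is a Γ-subcomplex `A` of `K`
containing `ν^r_K(L)` (and `L`) which strongly Γ-collapses to `L`. -/
def IsNDRPair (Γ : Type*) [Group Γ] {V : Type*} (a : Γ → V → V) (K L : Cplx V) (r : ℕ) : Prop :=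
  ∃ A : Cplx V, A.faces ⊆ K.faces ∧ L.faces ⊆ A.faces ∧
    (∀ γ : Γ, ∀ σ ∈ A.faces, (a γ) '' σ ∈ A.faces) ∧
    (nbhdIter K L r).faces ⊆ A.faces ∧ CplxCollapses Γ a A L

/-- A graph: a symmetric (loops allowed) adjacency relation on the vertex type `V`. -/
structure SymGraph (V : Type*) where
  Adj : V → V → Prop
  symm : ∀ v w, Adj v w → Adj w v

/-- A graph homomorphism from `G` to `H`. -/
def IsGraphHom {V W : Type*} (G : SymGraph V) (H : SymGraph W) (f : V → W) : Prop :=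
  ∀ v w, G.Adj v w → H.Adj (f v) (f w)

/-- A multi-homomorphism from `G` to `H`: it assigns to each vertex of `G` a nonempty set of
vertices of `H` so that adjacent vertices have completely adjacent images.  The
multi-homomorphisms, ordered pointwise by inclusion, form the Hom complex `Hom(G, H)`. -/
def IsMultiHom {V W : Type*} (G : SymGraph V) (H : SymGraph W) (η : V → Set W) : Prop :=
  (∀ v, (η v).Nonempty) ∧ ∀ v w, G.Adj v w → ∀ x ∈ η v, ∀ y ∈ η w, H.Adj x y

/-- One step of a zigzag in `Hom(G, H)`: both multi-homomorphisms are comparable. -/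
def mhStep {V W : Type*} (G : SymGraph V) (H : SymGraph W) (η η' : V → Set W) : Prop :=
  IsMultiHom G H η ∧ IsMultiHom G H η' ∧ ((∀ v, η v ⊆ η' v) ∨ (∀ v, η' v ⊆ η v))

/-- Two graph homomorphisms are ×-homotopic iff they lie in the same connected component of
the Hom complex `Hom(G, H)`. -/
def XHomotopic {V W : Type*} (G : SymGraph V) (H : SymGraph W) (f g : V → W) : Prop :=
  Relation.ReflTransGen (mhStep G H) (fun v => {f v}) (fun v => {g v})

/-- `f : G → H` is a ×-homotopy equivalence. -/
def IsXHomotopyEquiv {V W : Type*} (G : SymGraph V) (H : SymGraph W) (f : V → W) : Prop :=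
  IsGraphHom G H f ∧ ∃ h : W → V, IsGraphHom H G h ∧
    XHomotopic G G (h ∘ f) id ∧ XHomotopic H H (f ∘ h) id
/-- An element of `Def(G, H)`, where `H` is the induced subgraph of `G` on `S`: a
multi-homomorphism `η : G → G` with `η w = {w}` for every vertex `w` of `H`. -/
def IsDefMultiHom {V : Type*} (G : SymGraph V) (S : Set V) (η : V → Set V) : Prop :=
  IsMultiHom G G η ∧ ∀ w ∈ S, η w = {w}

/-- One step of a zigzag in `Def(G, H)`. -/
def defMHStep {V : Type*} (G : SymGraph V) (S : Set V) (η η' : V → Set V) : Prop :=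
  IsDefMultiHom G S η ∧ IsDefMultiHom G S η' ∧ ((∀ v, η v ⊆ η' v) ∨ (∀ v, η' v ⊆ η v))

/-- The induced subgraph of `G` on `S` is a ×-homotopy deformation retract of `G`: there is a
graph homomorphism `f` in the identity component of `Def(G, H)` with `f v ∈ S` for every
vertex `v` of `G`. -/
def IsXDefRetract {V : Type*} (G : SymGraph V) (S : Set V) : Prop :=
  ∃ f : V → V, IsDefMultiHom G S (fun v => {f v}) ∧
    Relation.ReflTransGen (defMHStep G S) (fun v => {v}) (fun v => {f v}) ∧
    ∀ v, f v ∈ S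
/-- A subgraph of `G`: a set of vertices together with a symmetric set of edges of `G`. -/
structure Subgraph {V : Type*} (G : SymGraph V) where
  verts : Set V
  Adj : V → V → Prop
  adj_sub : ∀ v w, Adj v w → G.Adj v w
  symm : ∀ v w, Adj v w → Adj w v

/-- Containment of subgraphs of `G`. -/
def Subgraph.le {V : Type*} {G : SymGraph V} (H H' : Subgraph G) : Prop :=
  H.verts ⊆ H'.verts ∧ ∀ v w, H.Adj v w → H'.Adj v w

/-- The neighborhood `ν_G(H)` of the subgraph `H` of `G`: its vertices are the vertices of `G`
adjacent to some vertex of `H`, and its edges are the edges of `G` with at least one endpoint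
in `H`. -/
def gnbhd {V : Type*} (G : SymGraph V) (H : Subgraph G) : Subgraph G where
  verts := {v | ∃ w ∈ H.verts, G.Adj v w}
  Adj v w := G.Adj v w ∧ (v ∈ H.verts ∨ w ∈ H.verts)
  adj_sub := fun _ _ h => h.1
  symm := fun _ _ h => ⟨G.symm _ _ h.1, h.2.symm⟩

/-- The iterated neighborhood `ν^r_G(H)` (with `ν^0_G(H) = H`). -/
def gnbhdIter {V : Type*} (G : SymGraph V) (H : Subgraph G) : ℕ → Subgraph G
  | 0 => H
  | r + 1 => gnbhd G (gnbhdIter G H r)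
/-- A subgraph of `G` regarded as a graph in its own right (on its vertex set). -/
def Subgraph.coe {V : Type*} {G : SymGraph V} (H : Subgraph G) : SymGraph H.verts where
  Adj x y := H.Adj x y
  symm := fun x y h => H.symm _ _ h

/-- `(G, H)` is an `r`-NDR pair of graphs: there is a subgraph `H'` of `G` containing `H` and
`ν^r_G(H)` such that `H` is a ×-homotopy deformation retract of `H'`. -/
def GraphNDRPair {V : Type*} (G : SymGraph V) (H : Subgraph G) (r : ℕ) : Prop :=
  ∃ H' : Subgraph G, Subgraph.le H H' ∧ Subgraph.le (gnbhdIter G H r) H' ∧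
    IsXDefRetract H'.coe {x : H'.verts | (x : V) ∈ H.verts}
/-- `ρ` is a right action of the group `Γ` on the graph `T` by graph automorphisms. -/
def IsRightGraphAction (Γ : Type*) [Group Γ] {VT : Type*} (T : SymGraph VT)
    (ρ : Γ → VT → VT) : Prop :=
  (∀ x, ρ 1 x = x) ∧ (∀ γ γ' : Γ, ∀ x, ρ (γ * γ') x = ρ γ' (ρ γ x)) ∧
    ∀ γ : Γ, IsGraphHom T T (ρ γ)

/-- The orbit relation generating the quotient `Γ\(T × A(K))`: `γ·(x, v) = (xγ⁻¹, γv)`. -/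
def ATrel {Γ VT VK : Type*} [Group Γ] (ρ : Γ → VT → VT) (a : Γ → VK → VK)
    (p q : VT × VK) : Prop :=
  ∃ γ : Γ, q = (ρ γ⁻¹ p.1, a γ p.2)

/-- The graph `A_T(K) = Γ\(T × A(K))`: the vertices are the Γ-orbits of pairs of a vertex of
`T` and a vertex of `K`, and two orbits are adjacent iff they contain adjacent
representatives, a pair `(x, v)`, `(y, w)` being adjacent in `T × A(K)` iff `x`, `y` are
adjacent in `T` and `{v, w}` is a simplex of `K`. -/
def ATgraph {Γ VT VK : Type*} [Group Γ] (T : SymGraph VT) (ρ : Γ → VT → VT)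
    (K : Cplx VK) (a : Γ → VK → VK) : SymGraph (Quot (ATrel ρ a)) where
  Adj c d := ∃ p q : VT × VK, Quot.mk (ATrel ρ a) p = c ∧ Quot.mk (ATrel ρ a) q = d ∧
    T.Adj p.1 q.1 ∧ ({p.2, q.2} : Set VK) ∈ K.faces
  symm := by
    rintro c d ⟨p, q, hp, hq, hT, hK⟩
    exact ⟨q, p, hq, hp, T.symm _ _ hT, by rwa [Set.pair_comm]⟩

/-- The vertex set of `A_T(L)` inside `A_T(K)` (for a subcomplex `L` of `K`): the orbits of
pairs whose second component is a vertex of `L`. -/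
def ATverts {Γ VT VK : Type*} [Group Γ] (ρ : Γ → VT → VT) (a : Γ → VK → VK)
    (L : Cplx VK) : Set (Quot (ATrel ρ a)) :=
  {c | ∃ p : VT × VK, Quot.mk (ATrel ρ a) p = c ∧ p.2 ∈ L.verts}
theorem nbhdIter_faces_subset {V : Type*} {K L : Cplx V} (hLK : L.faces ⊆ K.faces) :
    ∀ r : ℕ, (nbhdIter K L r).faces ⊆ K.faces
  | 0 => hLK
  | r + 1 => fun σ hσ => by
      obtain ⟨v, -, h⟩ := hσ
      exact K.down_closed _ h _ (Set.subset_insert _ _)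

/-- For a subcomplex `L` of `K`, the graph `A_T(L)` regarded as a subgraph of `A_T(K)`. -/
def ATsubgraph {Γ VT VK : Type*} [Group Γ] (T : SymGraph VT) (ρ : Γ → VT → VT)
    (K : Cplx VK) (a : Γ → VK → VK) (L : Cplx VK) (hLK : L.faces ⊆ K.faces) :
    Subgraph (ATgraph T ρ K a) where
  verts := ATverts ρ a L
  Adj c d := ∃ p q : VT × VK, Quot.mk (ATrel ρ a) p = c ∧ Quot.mk (ATrel ρ a) q = d ∧
    T.Adj p.1 q.1 ∧ ({p.2, q.2} : Set VK) ∈ L.faces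
  adj_sub := by
    rintro c d ⟨p, q, hp, hq, hT, hL⟩
    exact ⟨p, q, hp, hq, hT, hLK hL⟩
  symm := by
    rintro c d ⟨p, q, hp, hq, hT, hL⟩
    exact ⟨q, p, hq, hp, T.symm _ _ hT, by rwa [Set.pair_comm]⟩


/-!
Let `A ⊇ ν^r_K(L)` be the `Γ`-subcomplex collapsing to `L`. An equivariant multi-map `η` of `A`
induces on `A_T(A) = Γ\(T × A(A))` the multi-homomorphism
`[x, v] ↦ {[x, w] | w ∈ η v}`, well defined because `η` is equivariant; it is monotone in `η`
and fixes `A_T(L)` when `η` fixes `L`. So the zigzag in `Def_Γ(A, L)` from the identity to the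
collapse `f` lifts to a zigzag in `Def(A_T(A), A_T(L))` ending at a retraction onto `A_T(L)`.
For the neighborhoods, an edge `[x, v]`–`[y, w]` of `A_T(K)` with `[y, w]` in `A_T(M)` has
`w ∈ M` as soon as the vertex set of `M` is `Γ`-invariant, hence `{v, w} ∈ ν_K(M)`; by
induction `ν^r(A_T(L)) ≤ A_T(ν^r_K(L)) ≤ A_T(A)`; the vertex set of `L` is `Γ`-invariant because
the equivariant collapse fixes it pointwise and maps into `L`.
-/

open Set

theorem Cplx.mem_verts_of_mem {V : Type*} {K : Cplx V} {σ : Set V} (hσ : σ ∈ K.faces)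
    {v : V} (hv : v ∈ σ) : v ∈ K.verts :=
  K.down_closed σ hσ {v} (singleton_subset_iff.2 hv)

theorem Cplx.mapsTo_verts {V : Type*} {K : Cplx V} {f : V → V}
    (hf : ∀ σ ∈ K.faces, f '' σ ∈ K.faces) : MapsTo f K.verts K.verts := fun v hv => by
  have := hf {v} hv
  rwa [image_singleton] at this

theorem IsMultiMap.subset_verts {V W : Type*} {K : Cplx V} {L : Cplx W} {η : V → Set W}
    (hη : IsMultiMap K L η) {v : V} (hv : v ∈ K.verts) : η v ⊆ L.verts := fun _ hw =>
  Cplx.mem_verts_of_mem (by simpa only [biUnion_singleton] using hη.2 {v} hv) hw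

theorem IsMultiMap.pair_mem {V W : Type*} {K : Cplx V} {L : Cplx W} {η : V → Set W}
    (hη : IsMultiMap K L η) {v w : V} (hvw : ({v, w} : Set V) ∈ K.faces) {x y : W}
    (hx : x ∈ η v) (hy : y ∈ η w) : ({x, y} : Set W) ∈ L.faces := by
  refine L.down_closed _ (hη.2 _ hvw) _ ?_
  rw [biUnion_pair]
  exact insert_subset (Or.inl hx) (singleton_subset_iff.2 (Or.inr hy))

theorem nbhd_mapsTo_verts {V : Type*} {K M : Cplx V} {f : V → V}
    (hK : ∀ σ ∈ K.faces, f '' σ ∈ K.faces) (hM : MapsTo f M.verts M.verts) :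
    MapsTo f (nbhd K M).verts (nbhd K M).verts := by
  rintro v ⟨u, hu, huv⟩
  refine ⟨f u, hM hu, ?_⟩
  simpa only [image_insert_eq, image_singleton] using hK _ huv

theorem nbhdIter_mapsTo_verts {V : Type*} {K L : Cplx V} {f : V → V}
    (hK : ∀ σ ∈ K.faces, f '' σ ∈ K.faces) (hL : MapsTo f L.verts L.verts) :
    ∀ r, MapsTo f (nbhdIter K L r).verts (nbhdIter K L r).verts
  | 0 => hL
  | r + 1 => nbhd_mapsTo_verts hK (nbhdIter_mapsTo_verts hK hL r)

theorem CplxCollapses.mapsTo_verts {Γ V : Type*} [Group Γ] {a : Γ → V → V} {A L : Cplx V}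
    (hLA : L.verts ⊆ A.verts) (hA : ∀ γ, MapsTo (a γ) A.verts A.verts)
    (h : CplxCollapses Γ a A L) (γ : Γ) : MapsTo (a γ) L.verts L.verts := by
  intro v hv
  obtain ⟨f, ⟨⟨-, hfeq⟩, hfix⟩, -, hfim⟩ := h
  have hfv : f v = v := singleton_eq_singleton_iff.1 (hfix v hv)
  have hfγv : f (a γ v) = a γ v := by
    simpa only [image_singleton, hfv, singleton_eq_singleton_iff] using hfeq γ v (hLA hv)
  have := hfim _ (hA γ (hLA hv))
  rwa [image_singleton, hfγv] at this

theorem Subgraph.le.trans {V : Type*} {G : SymGraph V} {H₁ H₂ H₃ : Subgraph G}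
    (h₁₂ : Subgraph.le H₁ H₂) (h₂₃ : Subgraph.le H₂ H₃) : Subgraph.le H₁ H₃ :=
  ⟨h₁₂.1.trans h₂₃.1, fun v w h => h₂₃.2 v w (h₁₂.2 v w h)⟩

theorem gnbhd_mono {V : Type*} {G : SymGraph V} {H H' : Subgraph G} (h : Subgraph.le H H') :
    Subgraph.le (gnbhd G H) (gnbhd G H') :=
  ⟨fun _ ⟨w, hw, hvw⟩ => ⟨w, h.1 hw, hvw⟩,
    fun _ _ ⟨hvw, hor⟩ => ⟨hvw, hor.imp (fun hv => h.1 hv) (fun hw => h.1 hw)⟩⟩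

section OrbitGraph

variable {Γ VT VK : Type*} [Group Γ] {T : SymGraph VT} {ρ : Γ → VT → VT} {a : Γ → VK → VK}
  {K : Cplx VK}

theorem ATrel_equivalence (hρ1 : ∀ x, ρ 1 x = x)
    (hρmul : ∀ γ γ' : Γ, ∀ x, ρ (γ * γ') x = ρ γ' (ρ γ x)) (ha1 : ∀ v, a 1 v = v)
    (hamul : ∀ γ γ' : Γ, ∀ v, a (γ * γ') v = a γ (a γ' v)) : Equivalence (ATrel ρ a) where
  refl p := ⟨1, by rw [inv_one, hρ1, ha1]⟩
  symm := by
    rintro p _ ⟨γ, rfl⟩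
    refine ⟨γ⁻¹, ?_⟩
    change p = (ρ γ⁻¹⁻¹ (ρ γ⁻¹ p.1), a γ⁻¹ (a γ p.2))
    rw [inv_inv, ← hρmul, ← hamul, inv_mul_cancel, hρ1, ha1]
  trans := by
    rintro p _ _ ⟨γ, rfl⟩ ⟨γ', rfl⟩
    refine ⟨γ' * γ, ?_⟩
    change (ρ γ'⁻¹ (ρ γ⁻¹ p.1), a γ' (a γ p.2)) = _
    rw [← hρmul, ← hamul, mul_inv_rev]

theorem ATrel_of_mk_eq (hR : Equivalence (ATrel ρ a)) {p q : VT × VK}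
    (h : Quot.mk (ATrel ρ a) p = Quot.mk (ATrel ρ a) q) : ATrel ρ a p q :=
  hR.eqvGen_iff.1 (Quot.eqvGen_exact h)

theorem mk_mem_ATverts_iff (hR : Equivalence (ATrel ρ a)) {M : Cplx VK}
    (hM : ∀ γ, MapsTo (a γ) M.verts M.verts) {p : VT × VK} :
    Quot.mk (ATrel ρ a) p ∈ ATverts ρ a M ↔ p.2 ∈ M.verts := by
  refine ⟨fun ⟨q, hq, hqM⟩ => ?_, fun hp => ⟨p, rfl, hp⟩⟩
  obtain ⟨γ, rfl⟩ := ATrel_of_mk_eq hR hq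
  exact hM γ hqM

theorem ATsubgraph_mono {M N : Cplx VK} (hMK : M.faces ⊆ K.faces) (hNK : N.faces ⊆ K.faces)
    (hMN : M.faces ⊆ N.faces) :
    Subgraph.le (ATsubgraph T ρ K a M hMK) (ATsubgraph T ρ K a N hNK) :=
  ⟨fun _ ⟨p, hp, hpM⟩ => ⟨p, hp, hMN hpM⟩,
    fun _ _ ⟨p, q, hp, hq, hpq, hM⟩ => ⟨p, q, hp, hq, hpq, hMN hM⟩⟩

theorem gnbhd_ATsubgraph_le (hR : Equivalence (ATrel ρ a)) {M : Cplx VK}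
    (hM : ∀ γ, MapsTo (a γ) M.verts M.verts) (hMK : M.faces ⊆ K.faces)
    (hνK : (nbhd K M).faces ⊆ K.faces) :
    Subgraph.le (gnbhd (ATgraph T ρ K a) (ATsubgraph T ρ K a M hMK))
      (ATsubgraph T ρ K a (nbhd K M) hνK) := by
  refine ⟨?_, ?_⟩
  · rintro _ ⟨_, hd, p, q, rfl, rfl, -, hpq⟩
    refine ⟨p, rfl, q.2, (mk_mem_ATverts_iff hR hM).1 hd, ?_⟩
    rwa [pair_comm] at hpq
  · rintro _ _ ⟨⟨p, q, rfl, rfl, hpq, hK⟩, hp | hq⟩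
    · refine ⟨p, q, rfl, rfl, hpq, p.2, (mk_mem_ATverts_iff hR hM).1 hp, ?_⟩
      rwa [insert_eq_of_mem (mem_insert _ _)]
    · refine ⟨p, q, rfl, rfl, hpq, q.2, (mk_mem_ATverts_iff hR hM).1 hq, ?_⟩
      rwa [insert_eq_of_mem (mem_insert_of_mem _ (mem_singleton _))]

theorem gnbhdIter_ATsubgraph_le (hR : Equivalence (ATrel ρ a))
    (haK : ∀ γ, ∀ σ ∈ K.faces, a γ '' σ ∈ K.faces) {L : Cplx VK}
    (hL : ∀ γ, MapsTo (a γ) L.verts L.verts) (hLK : L.faces ⊆ K.faces) :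
    ∀ r, Subgraph.le (gnbhdIter (ATgraph T ρ K a) (ATsubgraph T ρ K a L hLK) r)
      (ATsubgraph T ρ K a (nbhdIter K L r) (nbhdIter_faces_subset hLK r))
  | 0 => ATsubgraph_mono hLK hLK subset_rfl
  | r + 1 => (gnbhd_mono (gnbhdIter_ATsubgraph_le hR haK hL hLK r)).trans <|
      gnbhd_ATsubgraph_le hR (fun γ => nbhdIter_mapsTo_verts (haK γ) (hL γ) r) _ _

variable (ρ a) in
def ATlift (A : Cplx VK) (η : VK → Set VK) (c : ATverts ρ a A) : Set (ATverts ρ a A) :=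
  {d | ∃ p : VT × VK, Quot.mk (ATrel ρ a) p = c ∧ ∃ w ∈ η p.2, Quot.mk (ATrel ρ a) (p.1, w) = d}

theorem mem_ATlift_iff (hR : Equivalence (ATrel ρ a)) {A : Cplx VK} {η : VK → Set VK}
    {p : VT × VK} (hη : ∀ γ, η (a γ p.2) = a γ '' η p.2) {c d : ATverts ρ a A}
    (hp : Quot.mk (ATrel ρ a) p = c) :
    d ∈ ATlift ρ a A η c ↔ ∃ w ∈ η p.2, Quot.mk (ATrel ρ a) (p.1, w) = d := by
  refine ⟨?_, fun ⟨w, hw, hd⟩ => ⟨p, hp, w, hw, hd⟩⟩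
  rintro ⟨q, hq, w', hw', hd⟩
  obtain ⟨γ, rfl⟩ := ATrel_of_mk_eq hR (hp.trans hq.symm)
  rw [hη] at hw'
  obtain ⟨w, hw, rfl⟩ := hw'
  exact ⟨w, hw, (Quot.sound ⟨γ, rfl⟩).trans hd⟩

theorem ATlift_singleton_self (A : Cplx VK) :
    ATlift ρ a A (fun v => {v}) = fun c => {c} := by
  funext c
  ext d
  refine ⟨fun ⟨p, hp, w, hw, hd⟩ => ?_, fun hd => ?_⟩
  · rw [mem_singleton_iff] at hw ⊢
    subst hw
    exact Subtype.ext (hd.symm.trans hp)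
  · obtain ⟨p, hp⟩ := Quot.exists_rep (c : Quot (ATrel ρ a))
    exact ⟨p, hp, p.2, rfl, hp.trans (congrArg Subtype.val hd).symm⟩

theorem exists_ATlift_singleton_eq (hR : Equivalence (ATrel ρ a)) {A M : Cplx VK} {f : VK → VK}
    (hf : ∀ γ, ∀ v ∈ A.verts, f (a γ v) = a γ (f v)) (hfA : MapsTo f A.verts A.verts)
    (hfM : MapsTo f A.verts M.verts) :
    ∃ F : ATverts ρ a A → ATverts ρ a A,
      ATlift ρ a A (fun v => {f v}) = (fun c => {F c}) ∧ ∀ c, (F c : Quot _) ∈ ATverts ρ a M := by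
  have key : ∀ c : ATverts ρ a A, ∃ d : ATverts ρ a A,
      ATlift ρ a A (fun v => {f v}) c = {d} ∧ (d : Quot _) ∈ ATverts ρ a M := by
    rintro ⟨_, p, rfl, hp⟩
    refine ⟨⟨_, (p.1, f p.2), rfl, hfA hp⟩, ?_, (p.1, f p.2), rfl, hfM hp⟩
    ext d
    rw [mem_ATlift_iff hR (fun γ => by rw [hf γ _ hp, image_singleton]) rfl]
    simp only [mem_singleton_iff, exists_eq_left, Subtype.ext_iff, eq_comm]
  choose F hF using key
  exact ⟨F, funext fun c => (hF c).1, fun c => (hF c).2⟩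

variable {A L : Cplx VK} (hAK : A.faces ⊆ K.faces)

theorem isDefMultiHom_ATlift (hR : Equivalence (ATrel ρ a)) (hLA : L.verts ⊆ A.verts)
    {η : VK → Set VK} (hη : IsDefMultiMap Γ a A L η) :
    IsDefMultiHom (ATsubgraph T ρ K a A hAK).coe {x | (x : Quot _) ∈ ATverts ρ a L}
      (ATlift ρ a A η) := by
  obtain ⟨⟨hmm, hequiv⟩, hfix⟩ := hη
  refine ⟨⟨?_, ?_⟩, ?_⟩
  · rintro ⟨_, p, rfl, hp⟩
    obtain ⟨w, hw⟩ := hmm.1 p.2 hp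
    exact ⟨⟨_, (p.1, w), rfl, hmm.subset_verts hp hw⟩, p, rfl, w, hw, rfl⟩
  · rintro c d ⟨p, q, hp, hq, hpq, hA⟩ x hx y hy
    have hpA := Cplx.mem_verts_of_mem hA (mem_insert _ _)
    have hqA := Cplx.mem_verts_of_mem hA (mem_insert_of_mem _ (mem_singleton _))
    obtain ⟨w, hw, hx⟩ := (mem_ATlift_iff hR (fun γ => hequiv γ _ hpA) hp).1 hx
    obtain ⟨z, hz, hy⟩ := (mem_ATlift_iff hR (fun γ => hequiv γ _ hqA) hq).1 hy
    exact ⟨(p.1, w), (q.1, z), hx, hy, hpq, hmm.pair_mem hA hw hz⟩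
  · rintro c ⟨p, hp, hpL⟩
    ext d
    change d ∈ ATlift ρ a A η c ↔ d = c
    rw [mem_ATlift_iff hR (fun γ => hequiv γ _ (hLA hpL)) hp, hfix _ hpL]
    simp only [mem_singleton_iff, exists_eq_left, hp]
    exact ⟨fun h => Subtype.ext h.symm, fun h => congrArg Subtype.val h.symm⟩

theorem ATlift_mono (hR : Equivalence (ATrel ρ a)) {η η' : VK → Set VK}
    (hη : ∀ γ, ∀ v ∈ A.verts, η (a γ v) = a γ '' η v)
    (hη' : ∀ γ, ∀ v ∈ A.verts, η' (a γ v) = a γ '' η' v) (hle : mmLE A η η')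
    (c : ATverts ρ a A) : ATlift ρ a A η c ⊆ ATlift ρ a A η' c := by
  obtain ⟨_, p, hp, hpA⟩ := c
  intro d hd
  rw [mem_ATlift_iff hR (fun γ => hη γ _ hpA) hp] at hd
  rw [mem_ATlift_iff hR (fun γ => hη' γ _ hpA) hp]
  obtain ⟨w, hw, hd⟩ := hd
  exact ⟨w, hle _ hpA hw, hd⟩

theorem defMHStep_ATlift (hR : Equivalence (ATrel ρ a)) (hLA : L.verts ⊆ A.verts)
    {η η' : VK → Set VK} (h : cplxDefStep Γ a A L η η') :
    defMHStep (ATsubgraph T ρ K a A hAK).coe {x | (x : Quot _) ∈ ATverts ρ a L}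
      (ATlift ρ a A η) (ATlift ρ a A η') := by
  obtain ⟨hη, hη', hle⟩ := h
  refine ⟨isDefMultiHom_ATlift hAK hR hLA hη, isDefMultiHom_ATlift hAK hR hLA hη', ?_⟩
  exact hle.imp (ATlift_mono hR hη.1.2 hη'.1.2) (ATlift_mono hR hη'.1.2 hη.1.2)

theorem isXDefRetract_ATsubgraph (hR : Equivalence (ATrel ρ a)) (hLA : L.verts ⊆ A.verts)
    (h : CplxCollapses Γ a A L) :
    IsXDefRetract (ATsubgraph T ρ K a A hAK).coe {x | (x : Quot _) ∈ ATverts ρ a L} := by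
  obtain ⟨f, hfDef, hzig, hfim⟩ := h
  have hf : ∀ γ, ∀ v ∈ A.verts, f (a γ v) = a γ (f v) := fun γ v hv => by
    simpa only [image_singleton, singleton_eq_singleton_iff] using hfDef.1.2 γ v hv
  have hfA : MapsTo f A.verts A.verts := fun v hv => hfDef.1.1.subset_verts hv rfl
  have hfL : MapsTo f A.verts L.verts := fun v hv => by
    have := hfim {v} hv
    rwa [image_singleton] at this
  obtain ⟨F, hF, hFL⟩ := exists_ATlift_singleton_eq hR hf hfA hfL
  refine ⟨F, hF ▸ isDefMultiHom_ATlift hAK hR hLA hfDef, ?_, hFL⟩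
  have := hzig.lift (ATlift ρ a A) fun _ _ => defMHStep_ATlift (T := T) hAK hR hLA
  rw [Function.onFun, ATlift_singleton_self, hF] at this
  exact this

end OrbitGraph

theorem AT_graphNDRPair_of_isNDRPair_general {Γ VT VK : Type*} [Group Γ]
    (T : SymGraph VT) (ρ : Γ → VT → VT) (hT : IsRightGraphAction Γ T ρ)
    (K L : Cplx VK) (a : Γ → VK → VK) (ha : IsCplxAction Γ a K)
    (hLK : L.faces ⊆ K.faces)
    (r : ℕ) (h : IsNDRPair Γ a K L r) :
    GraphNDRPair (ATgraph T ρ K a) (ATsubgraph T ρ K a L hLK) r := by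
  obtain ⟨A, hAK, hLA, hAinv, hνA, hcol⟩ := h
  have hR := ATrel_equivalence hT.1 hT.2.1 ha.1 ha.2.1
  have hLAv : L.verts ⊆ A.verts := fun v hv => hLA hv
  have hLinv := hcol.mapsTo_verts hLAv fun γ => Cplx.mapsTo_verts (hAinv γ)
  refine ⟨ATsubgraph T ρ K a A hAK, ATsubgraph_mono hLK hAK hLA, ?_,
    isXDefRetract_ATsubgraph hAK hR hLAv hcol⟩
  exact (gnbhdIter_ATsubgraph_le hR ha.2.2 hLinv hLK r).trans
    (ATsubgraph_mono (nbhdIter_faces_subset hLK r) hAK hνA)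

/-- Let Γ be a finite group and T a right Γ-graph.  If (K,L) is an r-NDR pair
of Γ-simplicial complexes, then (A_T(K), A_T(L)) is an r-NDR pair of graphs. -/
theorem AT_graphNDRPair_of_isNDRPair {Γ VT VK : Type*} [Group Γ] [Finite Γ]
    (T : SymGraph VT) (ρ : Γ → VT → VT) (hT : IsRightGraphAction Γ T ρ)
    (K L : Cplx VK) (a : Γ → VK → VK) (ha : IsCplxAction Γ a K)
    (haL : ∀ γ : Γ, ∀ σ ∈ L.faces, (a γ) '' σ ∈ L.faces) (hLK : L.faces ⊆ K.faces)
    (r : ℕ) (hr : 1 ≤ r) (h : IsNDRPair Γ a K L r) :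
    GraphNDRPair (ATgraph T ρ K a) (ATsubgraph T ρ K a L hLK) r :=
  AT_graphNDRPair_of_isNDRPair_general T ρ hT K L a ha hLK r h
end
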